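/- Let V be a valuation ring of characteristic p > 0 with fraction field K, maximal ideal m, and residue field κ, with [K:K^p] finite. If dim_{κ^p}(V/m^{[p]}) = [K:K^p], then V is a free V^p-module of rank [K:K^p]. -/

import Mathlib

universe u

/-- The subfield of `p`-th powers of a field of characteristic `p`. -/
def pthPowerSubfield (K : Type u) [Field K] (p : ℕ) [Fact p.Prime] [CharP K p] : Subfield K :=
  (frobenius K p).fieldRange

/-- The ring map `κ = V/m → V/m^{[p]}` sending the class of `a` to the class of `a^p`.
The module structure it induces on `V/m^{[p]}` is exactly the `κ^p`-vector space structure. -/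
noncomputable def residueFrobenius (V : Type u) [CommRing V] [IsLocalRing V]
    (p : ℕ) [Fact p.Prime] [CharP V p] :
    (V ⧸ IsLocalRing.maximalIdeal V) →+*
      (V ⧸ Ideal.map (frobenius V p) (IsLocalRing.maximalIdeal V)) :=
  Ideal.Quotient.lift _ ((Ideal.Quotient.mk _).comp (frobenius V p))
    (fun a ha => by
      simpa [Ideal.Quotient.eq_zero_iff_mem] using Ideal.mem_map_of_mem (frobenius V p) ha)

/-!
Lift a `κ^p`-basis of `κ` to units `u j` of `V`, and choose representatives `t i` of the
associate classes of elements outside `𝔪ᵖ = m^{[p]}` (finitely many, as they are independent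
in `V ⧸ 𝔪ᵖ`). If `x ^ p * t ~ y ^ p * t'` with `t, t' ∉ 𝔪ᵖ` then `t ~ t'`, so in any sum
`∑ c ^ p * t i * u j` the term of least valuation dominates. Consequently the products
`t i * u j` are linearly independent modulo `𝔪ᵖ`; a counterexample of largest valuation shows
that they also span `V ⧸ 𝔪ᵖ`, so there are `[K : K^p]` of them. The same domination makes them
`K^p`-independent, hence a `K^p`-basis of `K`, and it clears denominators: if
`b ^ p * x = ∑ A ^ p * t i * u j` then `b` divides every `A`. So they form a `V^p`-basis of `V`.
-/

open IsLocalRing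

theorem Nat.exists_and_not_succ_of_forall_le {P : ℕ → Prop} {n : ℕ} (h0 : P 0)
    (hle : ∀ k, P k → k ≤ n) : ∃ k, P k ∧ ¬ P (k + 1) := by
  classical
  exact ⟨Nat.findGreatest P n, Nat.findGreatest_spec (Nat.zero_le n) h0,
    fun h => Nat.findGreatest_is_greatest (Nat.lt_succ_self _) (hle _ h) h⟩

theorem Fin.pairwise_cons {α : Type*} {r : α → α → Prop} (hr : ∀ a b, r a b → r b a) {k : ℕ}
    {t : Fin k → α} (ht : Pairwise fun i j => r (t i) (t j)) {x : α} (hx : ∀ i, r x (t i)) :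
    Pairwise fun i j =>
      r ((Fin.cons x t : Fin (k + 1) → α) i) ((Fin.cons x t : Fin (k + 1) → α) j) := by
  intro i j hij
  cases i using Fin.cases <;> cases j using Fin.cases
  · exact absurd rfl hij
  · simpa using hx _
  · simpa using hr _ _ (hx _)
  · simpa using ht (fun h => hij (congrArg Fin.succ h))

theorem exists_algebraMap_sum_pow_mul_eq {V K ι : Type*} [CommRing V] [IsDomain V] [Field K]
    [Algebra V K] [IsFractionRing V K] {p : ℕ} [Fact p.Prime] [CharP K p] [Fintype ι] (e : ι → V)
    (f : ι → pthPowerSubfield K p) :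
    ∃ (b : V) (A : ι → V), b ≠ 0 ∧
      (∀ i, algebraMap V K b ^ p * f i = algebraMap V K (A i) ^ p) ∧
      algebraMap V K (∑ i, A i ^ p * e i) =
        algebraMap V K b ^ p * ∑ i, f i • algebraMap V K (e i) := by
  have hroot : ∀ i, ∃ δ : K, δ ^ p = f i := fun i => by
    obtain ⟨δ, hδ⟩ := RingHom.mem_fieldRange.mp (f i).2
    exact ⟨δ, by rw [← hδ, frobenius_def]⟩
  choose δ hδ using hroot
  obtain ⟨b, hb⟩ := IsLocalization.exist_integer_multiples_of_finite (nonZeroDivisors V) δ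
  choose A hA using hb
  have hterm : ∀ i, algebraMap V K b ^ p * f i = algebraMap V K (A i) ^ p := fun i => by
    rw [hA i, ← hδ i, Algebra.smul_def, mul_pow]
  refine ⟨b, A, nonZeroDivisors.ne_zero b.2, hterm, ?_⟩
  rw [map_sum, Finset.mul_sum]
  refine Finset.sum_congr rfl fun i _ => ?_
  rw [map_mul, map_pow, ← hterm i, Subfield.smul_def, smul_eq_mul]
  ring

namespace ValuationRing

variable {V : Type*} [CommRing V] [IsDomain V] [ValuationRing V] {ι ι' : Type*} [Fintype ι]
  [Fintype ι']

theorem exists_forall_dvd [Nonempty ι] (f : ι → V) : ∃ i, ∀ j, f i ∣ f j := by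
  classical
  obtain ⟨i, hi⟩ := Finite.exists_max fun i => Ideal.span {f i}
  exact ⟨i, fun j => Ideal.span_singleton_le_span_singleton.mp (hi j)⟩

/-- The residues of `u` are linearly independent over `κ^p`. -/
def ResiduallyPowIndependent (p : ℕ) (u : ι → V) : Prop :=
  ∀ c : ι → V, ∑ i, c i ^ p * u i ∈ maximalIdeal V → ∀ i, c i ∈ maximalIdeal V

variable {p : ℕ} [hp : Fact p.Prime]

theorem ResiduallyPowIndependent.isUnit {u : ι → V} (hu : ResiduallyPowIndependent p u) (i : ι) :
    IsUnit (u i) := by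
  classical
  refine notMem_maximalIdeal.mp fun h => ?_
  have := hu (Pi.single i 1) (by simpa [Pi.single_apply, zero_pow hp.out.ne_zero] using h) i
  simp at this

theorem ResiduallyPowIndependent.exists_sum_eq {u : ι → V} (hu : ResiduallyPowIndependent p u)
    (c : ι → V) : ∃ c₀ w, IsUnit w ∧ (∀ i, c₀ ∣ c i) ∧ ∑ i, c i ^ p * u i = c₀ ^ p * w := by
  classical
  cases isEmpty_or_nonempty ι
  · exact ⟨0, 1, isUnit_one, isEmptyElim, by simp [zero_pow hp.out.ne_zero]⟩
  obtain ⟨i₀, hi₀⟩ := exists_forall_dvd c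
  choose e he using hi₀
  set e' := Function.update e i₀ 1
  have he' : ∀ i, c i = c i₀ * e' i := fun i => by
    rcases eq_or_ne i i₀ with rfl | hi
    · simp [e']
    · simp [e', hi, he i]
  refine ⟨c i₀, ∑ i, e' i ^ p * u i, notMem_maximalIdeal.mp fun h => ?_,
    fun i => ⟨e' i, he' i⟩, ?_⟩
  · simpa [e'] using hu e' h i₀
  · rw [Finset.mul_sum]
    exact Finset.sum_congr rfl fun i _ => by rw [he' i, mul_pow, mul_assoc]

variable [CharP V p]

local notation "𝔪ᵖ" => Ideal.map (frobenius V p) (maximalIdeal V)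

theorem mem_map_frobenius_maximalIdeal_iff {x : V} :
    x ∈ 𝔪ᵖ ↔ ∃ g ∈ maximalIdeal V, g ^ p ∣ x := by
  constructor
  · intro hx
    refine Submodule.span_induction ?_ ⟨0, zero_mem _, dvd_zero _⟩ ?_ ?_ hx
    · rintro _ ⟨g, hg, rfl⟩
      exact ⟨g, hg, by rw [frobenius_def]⟩
    · rintro y z - - ⟨g, hg, hgy⟩ ⟨g', hg', hgz⟩
      rcases dvd_total g g' with h | h
      · exact ⟨g, hg, dvd_add hgy ((pow_dvd_pow_of_dvd h p).trans hgz)⟩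
      · exact ⟨g', hg', dvd_add ((pow_dvd_pow_of_dvd h p).trans hgy) hgz⟩
    · rintro a y - ⟨g, hg, hgy⟩
      exact ⟨g, hg, dvd_mul_of_dvd_right hgy a⟩
  · rintro ⟨g, hg, hgx⟩
    refine Ideal.mem_of_dvd _ hgx ?_
    simpa [frobenius_def] using Ideal.mem_map_of_mem (frobenius V p) hg

theorem map_frobenius_maximalIdeal_le : 𝔪ᵖ ≤ maximalIdeal V := fun _ hx => by
  obtain ⟨g, hg, hgx⟩ := mem_map_frobenius_maximalIdeal_iff.mp hx
  exact Ideal.mem_of_dvd _ hgx (Ideal.pow_mem_of_mem _ hg p hp.out.pos)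

theorem mem_maximalIdeal_of_pow_mul_mem {c e : V} (he : e ∉ 𝔪ᵖ) (h : c ^ p * e ∈ 𝔪ᵖ) :
    c ∈ maximalIdeal V := by
  by_contra hc
  exact he ((Ideal.unit_mul_mem_iff_mem _ ((notMem_maximalIdeal.mp hc).pow p)).mp h)

theorem dvd_of_pow_dvd_pow_mul {a b e : V} (he : e ∉ 𝔪ᵖ) (h : b ^ p ∣ a ^ p * e) : b ∣ a := by
  by_contra hba
  obtain ⟨q, rfl⟩ := (dvd_total b a).resolve_left hba
  have ha : a ≠ 0 := by rintro rfl; simp at hba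
  have hq : q ∈ maximalIdeal V := fun hq => hba ((hq.mul_right_dvd).mpr dvd_rfl)
  rw [mul_pow, mul_dvd_mul_iff_left (pow_ne_zero p ha)] at h
  exact he (mem_map_frobenius_maximalIdeal_iff.mpr ⟨q, hq, h⟩)

theorem associated_of_associated_pow_mul {x y t t' : V} (ht : t ∉ 𝔪ᵖ) (ht' : t' ∉ 𝔪ᵖ)
    (h0 : x ^ p * t ≠ 0) (h : Associated (x ^ p * t) (y ^ p * t')) : Associated t t' := by
  wlog hxy : x ∣ y generalizing x y t t'
  · exact (this ht' ht (h.ne_zero_iff.mp h0) h.symm ((dvd_total x y).resolve_left hxy)).symm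
  obtain ⟨q, rfl⟩ := hxy
  rw [mul_pow, mul_assoc] at h
  have hq : Associated t (q ^ p * t') := h.of_mul_left (.refl _) (left_ne_zero_of_mul h0)
  by_cases hq_unit : IsUnit q
  · exact hq.trans (associated_unit_mul_left _ _ (hq_unit.pow p))
  · exact absurd (mem_map_frobenius_maximalIdeal_iff.mpr
      ⟨q, hq_unit, (dvd_mul_right _ _).trans hq.symm.dvd⟩) ht

theorem sum_pow_mul_unit_mul_dvd {t : ι → V} (ht : ∀ i, t i ∉ 𝔪ᵖ)
    (ht' : Pairwise fun i j => ¬ Associated (t i) (t j)) {w : ι → V} (hw : ∀ i, IsUnit (w i))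
    (c : ι → V) (i : ι) : ∑ j, c j ^ p * (w j * t j) ∣ c i ^ p * t i := by
  classical
  have : Nonempty ι := ⟨i⟩
  obtain ⟨i₀, hi₀⟩ := exists_forall_dvd fun j => c j ^ p * t j
  refine dvd_trans ?_ (hi₀ i)
  by_cases h0 : c i₀ ^ p * t i₀ = 0
  · rw [h0]; exact dvd_zero _
  choose f hf using hi₀
  have hf₀ : f i₀ = 1 := mul_left_cancel₀ h0 (by rw [← hf, mul_one])
  have hf_mem : ∀ j ≠ i₀, f j ∈ maximalIdeal V := fun j hj hfj =>
    ht' hj.symm (associated_of_associated_pow_mul (ht i₀) (ht j) h0 ⟨hfj.unit, (hf j).symm⟩)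
  have hsum : ∑ j, c j ^ p * (w j * t j) = c i₀ ^ p * t i₀ * ∑ j, w j * f j := by
    rw [Finset.mul_sum]
    exact Finset.sum_congr rfl fun j _ => by linear_combination w j * hf j
  -- the term of least valuation dominates: the cofactor is a unit plus an element of `𝔪`
  have hunit : IsUnit (∑ j, w j * f j) := by
    rw [← Finset.add_sum_erase _ _ (Finset.mem_univ i₀), hf₀, mul_one]
    have hrest : ∑ j ∈ Finset.univ.erase i₀, w j * f j ∈ maximalIdeal V :=
      Ideal.sum_mem _ fun j hj => Ideal.mul_mem_left _ _ (hf_mem j (Finset.ne_of_mem_erase hj))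
    refine notMem_maximalIdeal.mp fun h => notMem_maximalIdeal.mpr (hw i₀) ?_
    simpa using Ideal.sub_mem _ h hrest
  rw [hsum]
  exact hunit.mul_right_dvd.mpr dvd_rfl

/-- The valuation of `∑ i, c i ^ p * e i` is the least valuation of its terms. -/
def PowOrthogonal (p : ℕ) (e : ι → V) : Prop :=
  ∀ (c : ι → V) (i : ι), ∑ j, c j ^ p * e j ∣ c i ^ p * e i

theorem powOrthogonal_of_pairwise {t : ι → V} (ht : ∀ i, t i ∉ 𝔪ᵖ)
    (ht' : Pairwise fun i j => ¬ Associated (t i) (t j)) : PowOrthogonal p t := fun c i => by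
  simpa using sum_pow_mul_unit_mul_dvd ht ht' (w := 1) (fun _ => isUnit_one) c i

theorem powOrthogonal_mul {t : ι → V} (ht : ∀ i, t i ∉ 𝔪ᵖ)
    (ht' : Pairwise fun i j => ¬ Associated (t i) (t j)) {u : ι' → V}
    (hu : ResiduallyPowIndependent p u) : PowOrthogonal p fun z : ι × ι' => t z.1 * u z.2 := by
  intro c z
  choose c₀ w hw hc₀ hsum using fun i => hu.exists_sum_eq (fun j => c (i, j))
  have : ∑ z, c z ^ p * (t z.1 * u z.2) = ∑ i, c₀ i ^ p * (w i * t i) := by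
    rw [Fintype.sum_prod_type]
    refine Finset.sum_congr rfl fun i _ => ?_
    rw [← mul_assoc, ← hsum i, Finset.sum_mul]
    exact Finset.sum_congr rfl fun j _ => by ring
  rw [this]
  calc _ ∣ c₀ z.1 ^ p * t z.1 := sum_pow_mul_unit_mul_dvd ht ht' hw c₀ z.1
    _ ∣ c z ^ p * t z.1 := mul_dvd_mul_right (pow_dvd_pow_of_dvd (hc₀ z.1 z.2) p) _
    _ ∣ c z ^ p * (t z.1 * u z.2) := by rw [← mul_assoc]; exact dvd_mul_right _ _

namespace PowOrthogonal

variable {e : ι → V}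

theorem eq_zero_of_sum_eq_zero (he : PowOrthogonal p e) (heJ : ∀ i, e i ∉ 𝔪ᵖ) {c : ι → V}
    (h : ∑ i, c i ^ p * e i = 0) (i : ι) : c i = 0 := by
  have := zero_dvd_iff.mp (h ▸ he c i)
  have he0 : e i ≠ 0 := fun h0 => heJ i (h0 ▸ zero_mem _)
  exact pow_eq_zero_iff hp.out.ne_zero |>.mp ((mul_eq_zero.mp this).resolve_right he0)

theorem dvd_of_sum_eq_pow_mul (he : PowOrthogonal p e) (heJ : ∀ i, e i ∉ 𝔪ᵖ) {A : ι → V}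
    {b x : V} (h : ∑ i, A i ^ p * e i = b ^ p * x) (i : ι) : b ∣ A i :=
  dvd_of_pow_dvd_pow_mul (heJ i) ((Dvd.intro x h.symm).trans (he A i))

end PowOrthogonal

theorem ResiduallyPowIndependent.exists_sub_sum_mem {k : ℕ} {u : Fin k → V}
    (hu : ResiduallyPowIndependent p u) {x : V}
    (hx : ¬ ResiduallyPowIndependent p (Fin.cons x u : Fin (k + 1) → V)) :
    ∃ c : Fin k → V, x - ∑ i, c i ^ p * u i ∈ maximalIdeal V := by
  simp only [ResiduallyPowIndependent, not_forall, Fin.sum_univ_succ, Fin.cons_zero,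
    Fin.cons_succ] at hx
  obtain ⟨c, hc, i, hi⟩ := hx
  have hc₀ : IsUnit (c 0) := by
    refine notMem_maximalIdeal.mp fun h0 => hi (Fin.cases h0 (hu _ ?_) i)
    have hx : c 0 ^ p * x ∈ maximalIdeal V :=
      Ideal.mul_mem_right x _ (Ideal.pow_mem_of_mem _ h0 p hp.out.pos)
    simpa using Ideal.sub_mem _ hc hx
  obtain ⟨w, hw⟩ := hc₀.exists_left_inv
  refine ⟨fun i => -(w * c i.succ), ?_⟩
  have hwp : w ^ p * c 0 ^ p = 1 := by rw [← mul_pow, hw, one_pow]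
  have hneg : ∀ i, (-(w * c i.succ)) ^ p * u i = -(w ^ p * (c i.succ ^ p * u i)) := fun i => by
    rw [neg_pow, neg_one_pow_char, mul_pow]; ring
  convert Ideal.mul_mem_left _ (w ^ p) hc using 1
  rw [Finset.sum_congr rfl fun i _ => hneg i, Finset.sum_neg_distrib, ← Finset.mul_sum]
  linear_combination (-x) * hwp

section residueFrobeniusModule

noncomputable abbrev residueFrobeniusModule : Module (V ⧸ maximalIdeal V) (V ⧸ 𝔪ᵖ) :=
  (residueFrobenius V p).toModule

attribute [local instance] residueFrobeniusModule

theorem mk_smul_mk (c x : V) :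
    Ideal.Quotient.mk (maximalIdeal V) c • Ideal.Quotient.mk 𝔪ᵖ x =
      Ideal.Quotient.mk 𝔪ᵖ (c ^ p * x) :=
  rfl

theorem linearIndependent_mk_of_forall {e : ι → V}
    (h : ∀ c : ι → V, ∑ i, c i ^ p * e i ∈ 𝔪ᵖ → ∀ i, c i ∈ maximalIdeal V) :
    LinearIndependent (V ⧸ maximalIdeal V) fun i => Ideal.Quotient.mk 𝔪ᵖ (e i) := by
  rw [Fintype.linearIndependent_iff]
  intro g hg i
  choose c hc using fun i => Ideal.Quotient.mk_surjective (g i)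
  rw [← hc, Ideal.Quotient.eq_zero_iff_mem]
  refine h c ?_ i
  rw [← Ideal.Quotient.eq_zero_iff_mem, map_sum, ← hg]
  exact Finset.sum_congr rfl fun i _ => by rw [← hc, mk_smul_mk]

theorem ResiduallyPowIndependent.linearIndependent_mk {u : ι → V}
    (hu : ResiduallyPowIndependent p u) :
    LinearIndependent (V ⧸ maximalIdeal V) fun i => Ideal.Quotient.mk 𝔪ᵖ (u i) :=
  linearIndependent_mk_of_forall fun c hc => hu c (map_frobenius_maximalIdeal_le hc)

theorem PowOrthogonal.linearIndependent_mk {e : ι → V} (he : PowOrthogonal p e)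
    (heJ : ∀ i, e i ∉ 𝔪ᵖ) :
    LinearIndependent (V ⧸ maximalIdeal V) fun i => Ideal.Quotient.mk 𝔪ᵖ (e i) :=
  linearIndependent_mk_of_forall fun c hc i =>
    mem_maximalIdeal_of_pow_mul_mem (heJ i) (Ideal.mem_of_dvd _ (he c i) hc)

theorem mk_mul_mem_span {t : ι → V} (ht : ∀ x ∉ 𝔪ᵖ, ∃ i, Associated x (t i)) {u : ι' → V}
    (hu : ∀ x, ∃ c : ι' → V, x - ∑ j, c j ^ p * u j ∈ maximalIdeal V) (i : ι) (y : V) :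
    Ideal.Quotient.mk 𝔪ᵖ (y * t i) ∈ Submodule.span (V ⧸ maximalIdeal V)
      (Set.range fun z : ι × ι' => Ideal.Quotient.mk 𝔪ᵖ (t z.1 * u z.2)) := by
  classical
  set W := Submodule.span (V ⧸ maximalIdeal V)
    (Set.range fun z : ι × ι' => Ideal.Quotient.mk 𝔪ᵖ (t z.1 * u z.2))
  set B := Finset.univ.filter fun i => ∃ y, Ideal.Quotient.mk 𝔪ᵖ (y * t i) ∉ W
  by_contra h
  -- a counterexample `y * t i` with `t i` of largest valuation
  obtain ⟨i, hi, hmax⟩ := B.exists_min_image (fun i => Ideal.span {t i})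
    ⟨i, Finset.mem_filter.mpr ⟨Finset.mem_univ _, y, h⟩⟩
  obtain ⟨y, hy⟩ := (Finset.mem_filter.mp hi).2
  -- then `m * t i` is a counterexample of larger valuation
  obtain ⟨c, hc⟩ := hu y
  set m := y - ∑ j, c j ^ p * u j
  have hmW : Ideal.Quotient.mk 𝔪ᵖ (m * t i) ∉ W := by
    refine fun hm => hy ?_
    have hsplit : y * t i = m * t i + ∑ j, c j ^ p * (t i * u j) := by
      rw [show ∑ j, c j ^ p * (t i * u j) = (∑ j, c j ^ p * u j) * t i by
        rw [Finset.sum_mul]; exact Finset.sum_congr rfl fun j _ => by ring]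
      ring
    rw [hsplit, map_add, map_sum]
    refine add_mem hm (sum_mem fun j _ => ?_)
    rw [← mk_smul_mk]
    exact Submodule.smul_mem _ _ (Submodule.subset_span ⟨(i, j), rfl⟩)
  have hmJ : m * t i ∉ 𝔪ᵖ := fun h => hmW <| by
    rw [Ideal.Quotient.eq_zero_iff_mem.mpr h]
    exact zero_mem W
  obtain ⟨i', hi'⟩ := ht _ hmJ
  obtain ⟨v, hv⟩ := hi'.symm
  have hi'B : i' ∈ B := Finset.mem_filter.mpr ⟨Finset.mem_univ _, v, by rwa [mul_comm, hv]⟩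
  have hdvd : m * t i ∣ t i :=
    hi'.dvd.trans (Ideal.span_singleton_le_span_singleton.mp (hmax i' hi'B))
  have hti : t i ≠ 0 := by rintro h; simp [h] at hmW
  exact hc (isUnit_of_dvd_one ((mul_dvd_mul_iff_right hti).mp (by rwa [one_mul])))

theorem span_mk_mul_eq_top {t : ι → V} (ht : ∀ x ∉ 𝔪ᵖ, ∃ i, Associated x (t i)) {u : ι' → V}
    (hu : ∀ x, ∃ c : ι' → V, x - ∑ j, c j ^ p * u j ∈ maximalIdeal V) :
    Submodule.span (V ⧸ maximalIdeal V)
      (Set.range fun z : ι × ι' => Ideal.Quotient.mk 𝔪ᵖ (t z.1 * u z.2)) = ⊤ := by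
  refine Submodule.eq_top_iff'.mpr fun q => ?_
  obtain ⟨x, rfl⟩ := Ideal.Quotient.mk_surjective q
  by_cases hx : x ∈ 𝔪ᵖ
  · rw [Ideal.Quotient.eq_zero_iff_mem.mpr hx]
    exact zero_mem _
  obtain ⟨i, hi⟩ := ht x hx
  obtain ⟨v, hv⟩ := hi.symm
  rw [← hv, mul_comm]
  exact mk_mul_mem_span ht hu i _

theorem exists_residuallyPowIndependent_sub_sum_mem
    [Module.Finite (V ⧸ maximalIdeal V) (V ⧸ 𝔪ᵖ)] :
    ∃ (d : ℕ) (u : Fin d → V), ResiduallyPowIndependent p u ∧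
      ∀ x, ∃ c : Fin d → V, x - ∑ i, c i ^ p * u i ∈ maximalIdeal V := by
  obtain ⟨d, ⟨u, hu⟩, hd⟩ := Nat.exists_and_not_succ_of_forall_le
    (P := fun k => ∃ u : Fin k → V, ResiduallyPowIndependent p u)
    (n := Module.finrank (V ⧸ maximalIdeal V) (V ⧸ 𝔪ᵖ)) ⟨finZeroElim, fun _ _ i => i.elim0⟩
    fun _ ⟨_, hu⟩ => by simpa using hu.linearIndependent_mk.fintype_card_le_finrank
  exact ⟨d, u, hu, fun x => hu.exists_sub_sum_mem fun hx => hd ⟨_, hx⟩⟩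

theorem exists_pairwise_not_associated_exists_associated
    [Module.Finite (V ⧸ maximalIdeal V) (V ⧸ 𝔪ᵖ)] :
    ∃ (r : ℕ) (t : Fin r → V), (∀ i, t i ∉ 𝔪ᵖ) ∧
      (Pairwise fun i j => ¬ Associated (t i) (t j)) ∧ ∀ x ∉ 𝔪ᵖ, ∃ i, Associated x (t i) := by
  obtain ⟨r, ⟨t, ht, ht'⟩, hr⟩ := Nat.exists_and_not_succ_of_forall_le
    (P := fun k => ∃ t : Fin k → V,
      (∀ i, t i ∉ 𝔪ᵖ) ∧ Pairwise fun i j => ¬ Associated (t i) (t j))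
    (n := Module.finrank (V ⧸ maximalIdeal V) (V ⧸ 𝔪ᵖ))
    ⟨finZeroElim, finZeroElim, fun i => i.elim0⟩
    fun _ ⟨_, ht, ht'⟩ => by
      simpa using
        ((powOrthogonal_of_pairwise ht ht').linearIndependent_mk ht).fintype_card_le_finrank
  refine ⟨r, t, ht, ht', fun x hx => ?_⟩
  by_contra! hxt
  exact hr ⟨Fin.cons x t, Fin.forall_fin_succ.mpr ⟨hx, ht⟩,
    Fin.pairwise_cons (r := fun a b => ¬ Associated a b) (fun _ _ h h' => h h'.symm) ht' hxt⟩

end residueFrobeniusModule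

theorem PowOrthogonal.linearIndependent {e : ι → V} (he : PowOrthogonal p e)
    (heJ : ∀ i, e i ∉ 𝔪ᵖ) : LinearIndependent (frobenius V p).range e := by
  rw [Fintype.linearIndependent_iff]
  intro g hg i
  choose c hc using fun i => RingHom.mem_range.mp (g i).2
  have hsum : ∑ i, c i ^ p * e i = 0 := by
    rw [← hg]
    exact Finset.sum_congr rfl fun i _ => by
      rw [Subring.smul_def, smul_eq_mul, ← hc, frobenius_def]
  ext
  rw [← hc i, he.eq_zero_of_sum_eq_zero heJ hsum i, map_zero]
  rfl

section FractionField

variable {K : Type*} [Field K] [Algebra V K] [IsFractionRing V K] [CharP K p]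

theorem PowOrthogonal.linearIndependent_algebraMap {e : ι → V} (he : PowOrthogonal p e)
    (heJ : ∀ i, e i ∉ 𝔪ᵖ) :
    LinearIndependent (pthPowerSubfield K p) fun i => algebraMap V K (e i) := by
  rw [Fintype.linearIndependent_iff]
  intro f hf i
  obtain ⟨b, A, hb, hA, hsum⟩ := exists_algebraMap_sum_pow_mul_eq e f
  rw [hf, mul_zero, ← map_zero (algebraMap V K)] at hsum
  have hA0 := he.eq_zero_of_sum_eq_zero heJ (IsFractionRing.injective V K hsum) i
  have hfi := hA i
  rw [hA0, map_zero, zero_pow hp.out.ne_zero] at hfi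
  have hb' : algebraMap V K b ^ p ≠ 0 :=
    pow_ne_zero p ((map_ne_zero_iff _ (IsFractionRing.injective V K)).mpr hb)
  exact Subtype.ext ((mul_eq_zero.mp hfi).resolve_left hb')

theorem PowOrthogonal.span_eq_top {e : ι → V} (he : PowOrthogonal p e) (heJ : ∀ i, e i ∉ 𝔪ᵖ)
    (hK : Submodule.span (pthPowerSubfield K p) (Set.range fun i => algebraMap V K (e i)) = ⊤) :
    Submodule.span (frobenius V p).range (Set.range e) = ⊤ := by
  refine Submodule.eq_top_iff'.mpr fun x => ?_
  obtain ⟨f, hf⟩ := (Submodule.mem_span_range_iff_exists_fun _).mp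
    (hK ▸ Submodule.mem_top (x := algebraMap V K x))
  obtain ⟨b, A, hb, -, hsum⟩ := exists_algebraMap_sum_pow_mul_eq e f
  rw [hf, ← map_pow, ← map_mul] at hsum
  replace hsum := IsFractionRing.injective V K hsum
  choose C hC using he.dvd_of_sum_eq_pow_mul heJ hsum
  have hx : x = ∑ i, C i ^ p * e i := by
    refine mul_left_cancel₀ (pow_ne_zero p hb) ?_
    rw [← hsum, Finset.mul_sum]
    exact Finset.sum_congr rfl fun i _ => by rw [hC i, mul_pow, mul_assoc]
  exact (Submodule.mem_span_range_iff_exists_fun _).mpr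
    ⟨fun i => ⟨C i ^ p, C i, frobenius_def ..⟩, hx.symm⟩

end FractionField

noncomputable def PowOrthogonal.basis {e : ι → V} (he : PowOrthogonal p e)
    (heJ : ∀ i, e i ∉ 𝔪ᵖ) (K : Type*) [Field K] [Algebra V K] [IsFractionRing V K] [CharP K p]
    [FiniteDimensional (pthPowerSubfield K p) K]
    (hcard : Fintype.card ι = Module.finrank (pthPowerSubfield K p) K) :
    Module.Basis ι (frobenius V p).range V :=
  .mk (he.linearIndependent heJ) (he.span_eq_top heJ
    ((he.linearIndependent_algebraMap (K := K) heJ).span_eq_top_of_card_eq_finrank' hcard)).ge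

end ValuationRing

attribute [local instance] ValuationRing.residueFrobeniusModule

open ValuationRing

theorem free_of_residue_dim_eq
    (V : Type u) [CommRing V] [IsDomain V] [ValuationRing V]
    (K : Type u) [Field K] [Algebra V K] [IsFractionRing V K]
    (p : ℕ) [Fact p.Prime] [CharP V p] [CharP K p]
    [FiniteDimensional (pthPowerSubfield K p) K]
    (hdim :
      letI : Module (V ⧸ IsLocalRing.maximalIdeal V)
          (V ⧸ Ideal.map (frobenius V p) (IsLocalRing.maximalIdeal V)) :=
        (residueFrobenius V p).toModule
      Module.finrank (V ⧸ IsLocalRing.maximalIdeal V)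
          (V ⧸ Ideal.map (frobenius V p) (IsLocalRing.maximalIdeal V)) =
        Module.finrank (pthPowerSubfield K p) K) :
    Module.Free (frobenius V p).range V ∧
      Module.rank (frobenius V p).range V =
        (Module.finrank (pthPowerSubfield K p) K : Cardinal) := by
  let _ : Field (V ⧸ maximalIdeal V) := Ideal.Quotient.field _
  set J := Ideal.map (frobenius V p) (maximalIdeal V)
  have hdim' : Module.finrank (V ⧸ maximalIdeal V) (V ⧸ J) =
      Module.finrank (pthPowerSubfield K p) K := hdim
  have : Module.Finite (V ⧸ maximalIdeal V) (V ⧸ J) :=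
    Module.finite_of_finrank_pos (by rw [hdim']; exact Module.finrank_pos)
  obtain ⟨d, u, hu, hu_span⟩ := exists_residuallyPowIndependent_sub_sum_mem (V := V) (p := p)
  obtain ⟨r, t, ht, ht', ht_span⟩ :=
    exists_pairwise_not_associated_exists_associated (V := V) (p := p)
  have he := powOrthogonal_mul ht ht' hu
  have heJ (z : Fin r × Fin d) : t z.1 * u z.2 ∉ J := by
    rw [Ideal.mul_unit_mem_iff_mem _ (hu.isUnit z.2)]
    exact ht z.1
  have hcard : Fintype.card (Fin r × Fin d) = Module.finrank (pthPowerSubfield K p) K := by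
    rw [← hdim', Module.finrank_eq_card_basis
      (.mk (he.linearIndependent_mk heJ) (span_mk_mul_eq_top ht_span hu_span).ge)]
  let b := he.basis heJ K hcard
  exact ⟨.of_basis b, by rw [rank_eq_card_basis b, hcard]⟩
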